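/- arXiv:2605.10805 — 3 statements merged into one kernel-verified Lean document; each statement's English description precedes it below -/
import Mathlib

section
/- Let n ≥ 1, let ρ_n be a probability mass function on Fin n with ρ_n(i) > 0 for all i, let f : Fin n → ℝ, and let δ > 0. Then the minimum of ρ̃ ↦ ∑_i ρ̃(i) f(i) over the KL uncertainty set U(ρ_n, δ) is attained; moreover, if ρ̃* is a minimizer such that ρ̃*(i) > 0 for all i, the KL constraint is active at ρ̃* (i.e. ∑_i ρ̃*(i) log(ρ̃*(i)/ρ_n(i)) = δ), and f is not constant on Fin n, then there exist τ > 0 and s ∈ ℝ such that ρ̃*(i) = ρ_n(i) · exp((s − f(i))/τ) for every i, and this s satisfies s ≤ ∑_i ρ_n(i) f(i). -/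
/-!
Existence: the uncertainty set is a closed subset of the compact simplex (the divergence is
continuous), and it contains `ρn` because `δ ≥ 0`.

Tilting: let `g i = log (ρ̃* i / ρn i)`. Along a direction `d` with `∑ d = 0` the divergence
changes to first order by `∑ d g`, so every `d` with `∑ d g < 0` is a feasible direction and the
objective cannot decrease along it. Since the constraint is active with `δ > 0`, Gibbs' inequality
makes `d = ρn - ρ̃*` such a direction, and a Lagrange-multiplier argument in the dual space gives
`f = a g + b` with `a ≤ 0`; `a ≠ 0` because `f` is not constant, so `τ = -a`, `s = b`. Finally
`∑ ρn f = a ∑ ρn g + b ≥ b`, again by Gibbs' inequality `∑ ρn g ≤ 0`.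
-/

open Finset Filter Topology Real

theorem exists_nonpos_eq_smul_add_smul_of_nonneg {𝕜 E : Type*} [Field 𝕜] [LinearOrder 𝕜]
    [IsStrictOrderedRing 𝕜] [AddCommGroup E] [Module 𝕜 E] (S G F : Module.Dual 𝕜 E) {d₀ : E}
    (hS₀ : S d₀ = 0) (hG₀ : G d₀ < 0) (h : ∀ d, S d = 0 → G d < 0 → 0 ≤ F d) :
    ∃ a b : 𝕜, a ≤ 0 ∧ F = a • G + b • S := by
  have hker : ⨅ i, LinearMap.ker (![G, S] i) ≤ LinearMap.ker F := by
    intro d hd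
    simp only [Submodule.mem_iInf, LinearMap.mem_ker, Fin.forall_fin_two, Matrix.cons_val_zero,
      Matrix.cons_val_one] at hd ⊢
    obtain ⟨hGd, hSd⟩ := hd
    -- `t ↦ F (t • d + d₀)` is affine and nonnegative on all of `𝕜`, hence constant.
    have hline : ∀ t : 𝕜, 0 ≤ t * F d + F d₀ := fun t => by
      simpa [hGd, hSd, hS₀, hG₀] using h (t • d + d₀)
    by_contra hFd
    have := hline (-(F d₀ + 1) / F d)
    rw [div_mul_cancel₀ _ hFd] at this
    linarith
  obtain ⟨c, hc⟩ :=
    (Submodule.mem_span_range_iff_exists_fun 𝕜).1 (mem_span_of_iInf_ker_le_ker hker)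
  rw [Fin.sum_univ_two] at hc
  refine ⟨c 0, c 1, ?_, hc.symm⟩
  have hF₀ := h d₀ hS₀ hG₀
  simp only [← hc, Matrix.cons_val_zero, Matrix.cons_val_one, LinearMap.add_apply,
    LinearMap.smul_apply, hS₀, smul_eq_mul, mul_zero, add_zero] at hF₀
  exact nonpos_of_mul_nonneg_left hF₀ hG₀

theorem continuous_mul_log_div_const (c : ℝ) : Continuous fun x : ℝ => x * log (x / c) := by
  have h : (fun x : ℝ => x * log (x / c)) = fun x => c * ((x / c) * log (x / c)) := by
    funext x
    rcases eq_or_ne c 0 with rfl | hc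
    · simp
    · field_simp
  rw [h]
  exact continuous_const.mul (continuous_mul_log.comp (continuous_id.div_const c))

theorem mul_log_div_add_le {x h c : ℝ} (hx : 0 < x) (hxh : 0 < x + h) (hc : c ≠ 0) :
    (x + h) * log ((x + h) / c) ≤ x * log (x / c) + h * (log (x / c) + 1) + h ^ 2 / x := by
  have hsplit : log ((x + h) / c) = log ((x + h) / x) + log (x / c) := by
    rw [← log_mul (div_pos hxh hx).ne' (div_ne_zero hx.ne' hc)]
    field_simp
  have hlog : log ((x + h) / x) ≤ h / x := by
    have hdiff : (x + h) / x - 1 = h / x := by field_simp; ring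
    exact hdiff ▸ log_le_sub_one_of_pos (div_pos hxh hx)
  calc (x + h) * log ((x + h) / c)
      = (x + h) * log ((x + h) / x) + (x + h) * log (x / c) := by rw [hsplit, mul_add]
    _ ≤ (x + h) * (h / x) + (x + h) * log (x / c) := by gcongr
    _ = x * log (x / c) + h * (log (x / c) + 1) + h ^ 2 / x := by field_simp; ring

section KLDivergence

variable {ι : Type*} [Fintype ι]

/-- Since `Real.log 0 = 0`, a term with `p i = 0` contributes `0`, as in the convention
`0 log 0 = 0`. -/
noncomputable def klDivergence (p q : ι → ℝ) : ℝ := ∑ i, p i * log (p i / q i)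

def klBall (q : ι → ℝ) (δ : ℝ) : Set (ι → ℝ) := {p | p ∈ stdSimplex ℝ ι ∧ klDivergence p q ≤ δ}

theorem klDivergence_self (q : ι → ℝ) : klDivergence q q = 0 :=
  sum_eq_zero fun i _ => by rcases eq_or_ne (q i) 0 with h | h <;> simp [h]

theorem continuous_klDivergence (q : ι → ℝ) : Continuous fun p => klDivergence p q :=
  continuous_finsetSum _ fun i _ => (continuous_mul_log_div_const (q i)).comp (continuous_apply i)

theorem isCompact_klBall (q : ι → ℝ) (δ : ℝ) : IsCompact (klBall q δ) :=
  (isCompact_stdSimplex ℝ ι).inter_right (isClosed_le (continuous_klDivergence q) continuous_const)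

theorem exists_isMinOn_klBall {q : ι → ℝ} (hq : q ∈ stdSimplex ℝ ι) {δ : ℝ} (hδ : 0 ≤ δ)
    (f : ι → ℝ) : ∃ p ∈ klBall q δ, IsMinOn (fun p => ∑ i, p i * f i) (klBall q δ) p :=
  (isCompact_klBall q δ).exists_isMinOn ⟨q, hq, (klDivergence_self q).trans_le hδ⟩
    (continuous_finsetSum _ fun i _ => (continuous_apply i).mul continuous_const).continuousOn

theorem sum_mul_log_div_le {p q : ι → ℝ} (hp : ∀ i, 0 < p i) (hq : ∀ i, 0 < q i) :
    ∑ i, q i * log (p i / q i) ≤ ∑ i, p i - ∑ i, q i := by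
  rw [← sum_sub_distrib]
  refine sum_le_sum fun i _ => ?_
  calc q i * log (p i / q i) ≤ q i * (p i / q i - 1) :=
        mul_le_mul_of_nonneg_left (log_le_sub_one_of_pos (div_pos (hp i) (hq i))) (hq i).le
    _ = p i - q i := by field_simp [(hq i).ne']

theorem klDivergence_add_mul_le {p q d : ι → ℝ} {t : ℝ} (hp : ∀ i, 0 < p i)
    (hpt : ∀ i, 0 < p i + t * d i) (hq : ∀ i, q i ≠ 0) :
    klDivergence (fun i => p i + t * d i) q ≤
      klDivergence p q + t * ∑ i, d i * (log (p i / q i) + 1) + t ^ 2 * ∑ i, d i ^ 2 / p i := by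
  calc klDivergence (fun i => p i + t * d i) q
      ≤ ∑ i, (p i * log (p i / q i) + t * d i * (log (p i / q i) + 1) + (t * d i) ^ 2 / p i) :=
        sum_le_sum fun i _ => mul_log_div_add_le (hp i) (hpt i) (hq i)
    _ = _ := by
      simp only [klDivergence, sum_add_distrib, mul_sum]
      congr 1
      · simp only [mul_assoc]
      · exact sum_congr rfl fun i _ => by ring

theorem sum_mul_nonneg_of_isMinOn_klBall {p q f d : ι → ℝ} {δ : ℝ} (hp : ∀ i, 0 < p i)
    (hq : ∀ i, q i ≠ 0) (hpδ : p ∈ klBall q δ)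
    (hmin : IsMinOn (fun p => ∑ i, p i * f i) (klBall q δ) p)
    (hd : ∑ i, d i = 0) (hdg : ∑ i, d i * log (p i / q i) < 0) :
    0 ≤ ∑ i, d i * f i := by
  set Q := ∑ i, d i ^ 2 / p i
  have hline : ∀ᶠ t in 𝓝 (0 : ℝ), (∀ i, 0 < p i + t * d i) ∧
      ∑ i, d i * log (p i / q i) + t * Q < 0 := by
    refine (eventually_all.2 fun i => ?_).and ?_
    · exact ((continuous_const.add (continuous_id.mul continuous_const)).tendsto' 0 (p i)
        (by simp)).eventually (lt_mem_nhds (hp i))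
    · exact ((continuous_const.add (continuous_id.mul continuous_const)).tendsto' 0 _
        (by simp)).eventually (gt_mem_nhds hdg)
  obtain ⟨t, ⟨hpt, hdecr⟩, ht⟩ :=
    ((hline.filter_mono nhdsWithin_le_nhds).and (self_mem_nhdsWithin (s := Set.Ioi 0))).exists
  have hstep : (fun i => p i + t * d i) ∈ klBall q δ := by
    refine ⟨⟨fun i => (hpt i).le, ?_⟩, ?_⟩
    · simp only [sum_add_distrib, ← mul_sum, hd, hpδ.1.2, mul_zero, add_zero]
    · have hlin : ∑ i, d i * (log (p i / q i) + 1) = ∑ i, d i * log (p i / q i) := by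
        simp only [mul_add, mul_one, sum_add_distrib, hd, add_zero]
      have hkl := klDivergence_add_mul_le hp hpt hq
      rw [hlin] at hkl
      nlinarith [hpδ.2, mul_neg_of_pos_of_neg ht hdecr]
  have hle : ∑ i, p i * f i ≤ ∑ i, (p i + t * d i) * f i := hmin hstep
  simp only [add_mul, sum_add_distrib, mul_assoc, ← mul_sum] at hle
  exact nonneg_of_mul_nonneg_right (by linarith) ht

theorem exists_affine_log_div_of_isMinOn_klBall {p q f : ι → ℝ} {δ : ℝ} (hp : ∀ i, 0 < p i)
    (hq : ∀ i, 0 < q i) (hq₁ : ∑ i, q i = 1) (hpδ : p ∈ klBall q δ)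
    (hmin : IsMinOn (fun p => ∑ i, p i * f i) (klBall q δ) p) (hkl : 0 < klDivergence p q) :
    ∃ a b : ℝ, a ≤ 0 ∧ ∀ i, f i = a * log (p i / q i) + b := by
  classical
  let L : (ι → ℝ) → Module.Dual ℝ (ι → ℝ) := Fintype.linearCombination ℝ
  have hL : ∀ w d, L w d = ∑ i, d i * w i := fun _ _ => rfl
  -- Moving towards `q` strictly decreases the divergence, by Gibbs' inequality.
  have hG₀ : L (fun i => log (p i / q i)) (q - p) < 0 := by
    have hgibbs := sum_mul_log_div_le hp hq
    simp only [hL, Pi.sub_apply, sub_mul, sum_sub_distrib, hpδ.1.2, hq₁] at hgibbs ⊢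
    exact (sub_le_sub_right hgibbs _).trans_lt (by simpa [klDivergence] using hkl)
  obtain ⟨a, b, ha, hF⟩ := exists_nonpos_eq_smul_add_smul_of_nonneg (L fun _ => 1)
    (L fun i => log (p i / q i)) (L f) (d₀ := q - p)
    (by simp [hL, sum_sub_distrib, hpδ.1.2, hq₁]) hG₀
    (fun d hS hG => sum_mul_nonneg_of_isMinOn_klBall hp (fun i => (hq i).ne') hpδ hmin
      (by simpa [hL] using hS) hG)
  exact ⟨a, b, ha, fun i => by simpa [L] using LinearMap.congr_fun hF (Pi.single i 1)⟩

end KLDivergence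

theorem kl_uncertainty_min_general (n : ℕ) (ρn : Fin n → ℝ)
    (hρ_pos : ∀ i, 0 < ρn i) (hρ_sum : ∑ i, ρn i = 1)
    (f : Fin n → ℝ) (δ : ℝ) (hδ : 0 < δ) :
    ((∃ ρmin : Fin n → ℝ,
        ((∀ i, 0 ≤ ρmin i) ∧ (∑ i, ρmin i = 1) ∧
          ∑ i, ρmin i * Real.log (ρmin i / ρn i) ≤ δ) ∧
        (∀ ρ' : Fin n → ℝ,
          (∀ i, 0 ≤ ρ' i) → (∑ i, ρ' i = 1) →
          (∑ i, ρ' i * Real.log (ρ' i / ρn i) ≤ δ) →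
          ∑ i, ρmin i * f i ≤ ∑ i, ρ' i * f i)) ∧
      (∀ ρstar : Fin n → ℝ,
        (∀ i, 0 < ρstar i) → (∑ i, ρstar i = 1) →
        (∑ i, ρstar i * Real.log (ρstar i / ρn i) ≤ δ) →
        (∀ ρ' : Fin n → ℝ,
          (∀ i, 0 ≤ ρ' i) → (∑ i, ρ' i = 1) →
          (∑ i, ρ' i * Real.log (ρ' i / ρn i) ≤ δ) →
          ∑ i, ρstar i * f i ≤ ∑ i, ρ' i * f i) →
        (∑ i, ρstar i * Real.log (ρstar i / ρn i) = δ) →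
        (¬ ∃ k : ℝ, ∀ i, f i = k) →
        ∃ τ s : ℝ, 0 < τ ∧
          (∀ i, ρstar i = ρn i * Real.exp ((s - f i) / τ)) ∧
          s ≤ ∑ i, ρn i * f i)) := by
  refine ⟨?_, fun ρs hpos hsum hkl hmin hact hnc => ?_⟩
  · obtain ⟨p, hp, hpmin⟩ := exists_isMinOn_klBall ⟨fun i => (hρ_pos i).le, hρ_sum⟩ hδ.le f
    exact ⟨p, ⟨hp.1.1, hp.1.2, hp.2⟩, fun ρ' h₀ h₁ hρ' => hpmin ⟨⟨h₀, h₁⟩, hρ'⟩⟩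
  obtain ⟨a, b, ha, hf⟩ := exists_affine_log_div_of_isMinOn_klBall hpos hρ_pos hρ_sum
    ⟨⟨fun i => (hpos i).le, hsum⟩, hkl⟩ (fun ρ' h => hmin ρ' h.1.1 h.1.2 h.2)
    (hδ.trans_eq hact.symm)
  have ha₀ : a ≠ 0 := fun h => hnc ⟨b, fun i => by simp [hf i, h]⟩
  refine ⟨-a, b, neg_pos.2 (ha.lt_of_ne ha₀), fun i => ?_, ?_⟩
  · have hlog : (b - f i) / -a = log (ρs i / ρn i) := by
      rw [hf i]; field_simp; ring
    rw [hlog, exp_log (div_pos (hpos i) (hρ_pos i)), mul_div_cancel₀ _ (hρ_pos i).ne']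
  · have hmean : ∑ i, ρn i * f i = a * ∑ i, ρn i * log (ρs i / ρn i) + b := by
      simp only [hf, mul_add, sum_add_distrib, ← sum_mul, hρ_sum, one_mul, mul_sum, mul_left_comm]
    have hgibbs := sum_mul_log_div_le hpos hρ_pos
    rw [hsum, hρ_sum, sub_self] at hgibbs
    rw [hmean]
    nlinarith

/-- existence of a minimizer of the linear objective over the KL
uncertainty set, and the exponential-tilting form of any interior minimizer at
which the KL constraint is active (for non-constant `f`), with baseline bound
`s ≤ ∑ i, ρn i * f i`. Here `ρ̃ i * log (ρ̃ i / ρn i)` is `0` when `ρ̃ i = 0`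
(recall `Real.log 0 = 0`). -/
theorem kl_uncertainty_min (n : ℕ) (hn : 1 ≤ n) (ρn : Fin n → ℝ)
    (hρ_pos : ∀ i, 0 < ρn i) (hρ_sum : ∑ i, ρn i = 1)
    (f : Fin n → ℝ) (δ : ℝ) (hδ : 0 < δ) :
    ((∃ ρmin : Fin n → ℝ,
        ((∀ i, 0 ≤ ρmin i) ∧ (∑ i, ρmin i = 1) ∧
          ∑ i, ρmin i * Real.log (ρmin i / ρn i) ≤ δ) ∧
        (∀ ρ' : Fin n → ℝ,
          (∀ i, 0 ≤ ρ' i) → (∑ i, ρ' i = 1) →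
          (∑ i, ρ' i * Real.log (ρ' i / ρn i) ≤ δ) →
          ∑ i, ρmin i * f i ≤ ∑ i, ρ' i * f i)) ∧
      (∀ ρstar : Fin n → ℝ,
        (∀ i, 0 < ρstar i) → (∑ i, ρstar i = 1) →
        (∑ i, ρstar i * Real.log (ρstar i / ρn i) ≤ δ) →
        (∀ ρ' : Fin n → ℝ,
          (∀ i, 0 ≤ ρ' i) → (∑ i, ρ' i = 1) →
          (∑ i, ρ' i * Real.log (ρ' i / ρn i) ≤ δ) →
          ∑ i, ρstar i * f i ≤ ∑ i, ρ' i * f i) →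
        (∑ i, ρstar i * Real.log (ρstar i / ρn i) = δ) →
        (¬ ∃ k : ℝ, ∀ i, f i = k) →
        ∃ τ s : ℝ, 0 < τ ∧
          (∀ i, ρstar i = ρn i * Real.exp ((s - f i) / τ)) ∧
          s ≤ ∑ i, ρn i * f i)) :=
  kl_uncertainty_min_general n ρn hρ_pos hρ_sum f δ hδ
end

section
/- Let Λ = [0, Λ_max] with Λ_max > 0. There exists a unique pair (π*, λ*) ∈ Π × Λ such that L_β(π, λ*) ≤ L_β(π*, λ*) ≤ L_β(π*, λ) for all π ∈ Π and all λ ∈ Λ; that is, L_β has a saddle point on Π × Λ, and both its policy component π* (i.e. the conditional pmf π*(·|z) for every z ∈ Z) and its dual component λ* are unique. -/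
open Finset

/-- A routing policy: for each context `z`, a probability mass function on the
two actions `{0,1}` (encoded as `Bool`). -/
def IsPolicy {Z : Type*} (π : Z → Bool → ℝ) : Prop :=
  (∀ z a, 0 ≤ π z a) ∧ (∀ z, ∑ a, π z a = 1)

/-- Entropy of a pmf on `{0,1}`, with the convention `0 · log 0 = 0`. -/
noncomputable def entBool (p : Bool → ℝ) : ℝ := ∑ a, Real.negMulLog (p a)

/-- The regularized Lagrangian `L_β`. -/
noncomputable def Lbeta {Z : Type*} [Fintype Z] (ρ : Z → ℝ) (r c : Z → Bool → ℝ)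
    (w1 w2 : Z → ℝ) (β C : ℝ) (π : Z → Bool → ℝ) (lam : ℝ) : ℝ :=
  (∑ z, ρ z * ∑ a, π z a * (w1 z * r z a - lam * (w2 z * c z a)))
    + lam * C + β * ((∑ z, ρ z * entBool (π z)) + lam ^ 2 / 2)


/-! For fixed `λ`, `π ↦ L_β(π, λ)` is continuous and strictly concave on the compact convex
set of policies (the entropy is strictly concave and every `ρ z > 0`); for fixed `π`,
`λ ↦ L_β(π, λ)` is continuous and strictly convex (the term `β λ² / 2`). Sion's minimax
theorem therefore gives a saddle point. Two saddle points can be interchanged: `(π*, λ')` and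
`(π', λ*)` are again saddle points, so `π'` and `π*` both maximize the strictly concave
`L_β(·, λ*)`, and `λ'` and `λ*` both minimize the strictly convex `L_β(π*, ·)`. -/

open Set

theorem StrictConcaveOn.const_mul {E : Type*} [AddCommMonoid E] [Module ℝ E] {s : Set E}
    {f : E → ℝ} (hf : StrictConcaveOn ℝ s f) {c : ℝ} (hc : 0 < c) :
    StrictConcaveOn ℝ s fun x => c * f x :=
  ⟨hf.1, fun x hx y hy hxy a b ha hb hab => by
    have := mul_lt_mul_of_pos_left (hf.2 hx hy hxy ha hb hab) hc
    simp only [smul_eq_mul] at this ⊢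
    linarith⟩

theorem StrictConcaveOn.sum_pi {ι E : Type*} [Fintype ι] [AddCommMonoid E] [Module ℝ E]
    {s : ι → Set E} {φ : ι → E → ℝ} (hφ : ∀ i, StrictConcaveOn ℝ (s i) (φ i)) :
    StrictConcaveOn ℝ (Set.univ.pi s) fun x => ∑ i, φ i (x i) := by
  refine ⟨convex_pi fun i _ => (hφ i).1, fun x hx y hy hxy a b ha hb hab => ?_⟩
  obtain ⟨i, hi⟩ := Function.ne_iff.mp hxy
  simp only [smul_eq_mul, Finset.mul_sum, ← Finset.sum_add_distrib]
  refine Finset.sum_lt_sum (fun j _ => ?_) ⟨i, Finset.mem_univ i, ?_⟩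
  · exact (hφ j).concaveOn.2 (hx j trivial) (hy j trivial) ha.le hb.le hab
  · exact (hφ i).2 (hx i trivial) (hy i trivial) hi ha hb hab

theorem strictConcaveOn_entBool :
    StrictConcaveOn ℝ (Set.univ.pi fun _ => Ici (0 : ℝ)) entBool :=
  StrictConcaveOn.sum_pi fun _ => Real.strictConcaveOn_negMulLog

section Routing

variable {Z : Type*}

theorem convex_setOf_isPolicy : Convex ℝ {π : Z → Bool → ℝ | IsPolicy π} := by
  rintro π ⟨hπ0, hπ1⟩ π' ⟨hπ'0, hπ'1⟩ a b ha hb hab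
  refine ⟨fun z i => ?_, fun z => ?_⟩
  · simp only [Pi.add_apply, Pi.smul_apply, smul_eq_mul]
    exact add_nonneg (mul_nonneg ha (hπ0 z i)) (mul_nonneg hb (hπ'0 z i))
  · simp only [Pi.add_apply, Pi.smul_apply, smul_eq_mul, Finset.sum_add_distrib,
      ← Finset.mul_sum, hπ1 z, hπ'1 z, mul_one, hab]

theorem isCompact_setOf_isPolicy : IsCompact {π : Z → Bool → ℝ | IsPolicy π} := by
  have hclosed : IsClosed {π : Z → Bool → ℝ | IsPolicy π} := by
    simp only [IsPolicy, ofPred_and, ofPred_forall]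
    exact (isClosed_iInter fun z => isClosed_iInter fun a => isClosed_le continuous_const
      (by fun_prop)).inter
        (isClosed_iInter fun z => isClosed_eq (by fun_prop) continuous_const)
  refine (isCompact_univ_pi fun _ => isCompact_univ_pi fun _ =>
    isCompact_Icc (a := 0) (b := 1)).of_isClosed_subset
    hclosed fun π ⟨hπ0, hπ1⟩ z _ a _ => ⟨hπ0 z a, ?_⟩
  calc π z a ≤ ∑ b, π z b := Finset.single_le_sum (fun b _ => hπ0 z b) (Finset.mem_univ a)
    _ = 1 := hπ1 z

theorem nonempty_setOf_isPolicy : {π : Z → Bool → ℝ | IsPolicy π}.Nonempty :=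
  ⟨fun _ _ => 1 / 2, fun _ _ => by norm_num, fun _ => by norm_num⟩

variable [Fintype Z]

def expectedCost (ρ w2 : Z → ℝ) (c π : Z → Bool → ℝ) : ℝ :=
  ∑ z, ρ z * ∑ a, π z a * (w2 z * c z a)

variable {ρ : Z → ℝ} {r c : Z → Bool → ℝ} {w1 w2 : Z → ℝ} {β C : ℝ}

theorem Lbeta_eq_add_quadratic (π : Z → Bool → ℝ) (lam : ℝ) :
    Lbeta ρ r c w1 w2 β C π lam
      = Lbeta ρ r c w1 w2 β C π 0 + lam * (C - expectedCost ρ w2 c π) + β * lam ^ 2 / 2 := by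
  have hsplit : ∀ z, ρ z * ∑ a, π z a * (w1 z * r z a - lam * (w2 z * c z a))
      = ρ z * ∑ a, π z a * (w1 z * r z a - 0 * (w2 z * c z a))
        - lam * (ρ z * ∑ a, π z a * (w2 z * c z a)) := fun z => by
    simp only [Fintype.sum_bool]; ring
  simp only [Lbeta, expectedCost, hsplit, Finset.sum_sub_distrib, ← Finset.mul_sum]
  ring

theorem strictConvexOn_Lbeta_dual (hβ : 0 < β) (π : Z → Bool → ℝ) :
    StrictConvexOn ℝ univ (Lbeta ρ r c w1 w2 β C π) := by
  refine ⟨convex_univ, fun x _ y _ hxy a b ha hb hab => ?_⟩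
  -- `a L(x) + b L(y) - L(a x + b y) = β a b (x - y)² / 2`, as `L` is affine plus `β λ² / 2`.
  have hgap : 0 < β * (a * b * (x - y) ^ 2) :=
    mul_pos hβ (mul_pos (mul_pos ha hb) (sq_pos_of_ne_zero (sub_ne_zero.2 hxy)))
  simp only [smul_eq_mul]
  rw [Lbeta_eq_add_quadratic π x, Lbeta_eq_add_quadratic π y,
    Lbeta_eq_add_quadratic π (a * x + b * y)]
  obtain rfl : b = 1 - a := by linarith
  nlinarith

theorem continuous_Lbeta_dual (π : Z → Bool → ℝ) :
    Continuous (Lbeta ρ r c w1 w2 β C π) := by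
  unfold Lbeta
  fun_prop

theorem continuous_Lbeta_policy (lam : ℝ) :
    Continuous fun π => Lbeta ρ r c w1 w2 β C π lam := by
  unfold Lbeta entBool
  fun_prop

theorem strictConcaveOn_Lbeta_policy (hρ : ∀ z, 0 < ρ z) (hβ : 0 < β) (lam : ℝ) :
    StrictConcaveOn ℝ {π | IsPolicy π} fun π => Lbeta ρ r c w1 w2 β C π lam := by
  set g : Z → Bool → ℝ := fun z a => w1 z * r z a - lam * (w2 z * c z a)
  have hentropy :
      StrictConcaveOn ℝ {π | IsPolicy π} fun π => ∑ z, β * ρ z * entBool (π z) :=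
    (StrictConcaveOn.sum_pi fun z =>
      strictConcaveOn_entBool.const_mul (mul_pos hβ (hρ z))).subset
        (fun π hπ z _ a _ => hπ.1 z a) convex_setOf_isPolicy
  have hlinear :
      ConcaveOn ℝ {π | IsPolicy π} fun π => ∑ z, ρ z * ∑ a, π z a * g z a := by
    refine ⟨convex_setOf_isPolicy, fun π _ π' _ a b _ _ _ => le_of_eq ?_⟩
    simp only [Pi.add_apply, Pi.smul_apply, smul_eq_mul, Finset.mul_sum,
      ← Finset.sum_add_distrib]
    exact Finset.sum_congr rfl fun z _ => Finset.sum_congr rfl fun i _ => by ring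
  refine ((hentropy.add_concaveOn hlinear).add_const (lam * C + β * (lam ^ 2 / 2))).congr
    fun π _ => ?_
  simp only [Pi.add_apply, Lbeta, g, mul_add, Finset.mul_sum, mul_assoc]
  ring

end Routing

theorem isSaddlePointOn_iff_forall {E F β : Type*} [Preorder β] {X : Set E} {Y : Set F}
    {f : E → F → β} {a : E} {b : F} (ha : a ∈ X) (hb : b ∈ Y) :
    IsSaddlePointOn X Y f a b ↔ (∀ y ∈ Y, f a y ≤ f a b) ∧ ∀ x ∈ X, f a b ≤ f x b :=
  ⟨fun h => ⟨fun y hy => h a ha y hy, fun x hx => h x hx b hb⟩,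
    fun h x hx y hy => (h.1 y hy).trans (h.2 x hx)⟩

theorem IsSaddlePointOn.eq_of_strictConvexOn_of_strictConcaveOn {E F : Type*}
    [AddCommMonoid E] [Module ℝ E] [AddCommMonoid F] [Module ℝ F] {X : Set E} {Y : Set F}
    {f : E → F → ℝ} {a a' : E} {b b' : F} (ha : a ∈ X) (hb : b ∈ Y)
    (ha' : a' ∈ X) (hb' : b' ∈ Y)
    (h : IsSaddlePointOn X Y f a b) (h' : IsSaddlePointOn X Y f a' b')
    (hconvex : StrictConvexOn ℝ X (f · b)) (hconcave : StrictConcaveOn ℝ Y (f a)) :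
    a' = a ∧ b' = b := by
  have hab' := (isSaddlePointOn_iff_forall ha hb').1 (h.swap_left ha' hb h')
  have ha'b := (isSaddlePointOn_iff_forall ha' hb).1 (h.swap_right ha hb' h')
  have hab := (isSaddlePointOn_iff_forall ha hb).1 h
  exact ⟨hconvex.eq_of_isMinOn (isMinOn_iff.2 ha'b.2) (isMinOn_iff.2 hab.2) ha' ha,
    hconcave.eq_of_isMaxOn (isMaxOn_iff.2 hab'.1) (isMaxOn_iff.2 hab.1) hb' hb⟩

theorem saddle_point_exists_unique_general {Z : Type*} [Fintype Z]
    (ρ : Z → ℝ) (hρ_pos : ∀ z, 0 < ρ z)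
    (r c : Z → Bool → ℝ) (w1 w2 : Z → ℝ)
    (β : ℝ) (hβ : 0 < β) (C : ℝ) (Λmax : ℝ) (hΛmax : 0 < Λmax) :
    ∃! p : (Z → Bool → ℝ) × ℝ,
      IsPolicy p.1 ∧ p.2 ∈ Set.Icc (0 : ℝ) Λmax ∧
      (∀ π : Z → Bool → ℝ, IsPolicy π →
        Lbeta ρ r c w1 w2 β C π p.2 ≤ Lbeta ρ r c w1 w2 β C p.1 p.2) ∧
      (∀ lam ∈ Set.Icc (0 : ℝ) Λmax,
        Lbeta ρ r c w1 w2 β C p.1 p.2 ≤ Lbeta ρ r c w1 w2 β C p.1 lam) := by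
  set f : ℝ → (Z → Bool → ℝ) → ℝ := fun lam π => Lbeta ρ r c w1 w2 β C π lam
  have hconvex (π : Z → Bool → ℝ) : StrictConvexOn ℝ (Set.Icc 0 Λmax) (f · π) :=
    (strictConvexOn_Lbeta_dual hβ π).subset (subset_univ _) (convex_Icc _ _)
  have hconcave (lam : ℝ) : StrictConcaveOn ℝ {π | IsPolicy π} (f lam) :=
    strictConcaveOn_Lbeta_policy hρ_pos hβ lam
  obtain ⟨lam₀, hlam₀, π₀, hπ₀, hsaddle⟩ := Sion.exists_isSaddlePointOn
    (Set.nonempty_Icc.2 hΛmax.le) (convex_Icc _ _) isCompact_Icc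
    (fun π _ => (continuous_Lbeta_dual π).lowerSemicontinuous.lowerSemicontinuousOn _)
    (fun π _ => (hconvex π).convexOn.quasiconvexOn)
    convex_setOf_isPolicy nonempty_setOf_isPolicy isCompact_setOf_isPolicy
    (fun lam _ => (continuous_Lbeta_policy lam).upperSemicontinuous.upperSemicontinuousOn _)
    (fun lam _ => (hconcave lam).concaveOn.quasiconcaveOn)
  refine ⟨(π₀, lam₀),
    ⟨hπ₀, hlam₀, (isSaddlePointOn_iff_forall hlam₀ hπ₀).1 hsaddle⟩, ?_⟩
  rintro ⟨π, lam⟩ ⟨hπ, hlam, hmax, hmin⟩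
  have hsaddle' : IsSaddlePointOn (Set.Icc 0 Λmax) {π | IsPolicy π} f lam π :=
    fun x hx y hy => (hmax y hy).trans (hmin x hx)
  obtain ⟨rfl, rfl⟩ := hsaddle.eq_of_strictConvexOn_of_strictConcaveOn hlam₀ hπ₀ hlam hπ
    hsaddle' (hconvex π₀) (hconcave lam₀)
  rfl

/-- `L_β` admits a saddle point on `Π × [0, Λ_max]`, and the
saddle point is unique (both the policy component — i.e. the conditional pmf
`π*(·|z)` for every `z` — and the dual component `λ*`). -/
theorem saddle_point_exists_unique {Z : Type*} [Fintype Z] [Nonempty Z]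
    (ρ : Z → ℝ) (hρ_pos : ∀ z, 0 < ρ z) (hρ_sum : ∑ z, ρ z = 1)
    (r c : Z → Bool → ℝ) (w1 w2 : Z → ℝ)
    (hw1 : ∀ z, 0 ≤ w1 z) (hw2 : ∀ z, 0 ≤ w2 z)
    (β : ℝ) (hβ : 0 < β) (C : ℝ) (Λmax : ℝ) (hΛmax : 0 < Λmax) :
    ∃! p : (Z → Bool → ℝ) × ℝ,
      IsPolicy p.1 ∧ p.2 ∈ Set.Icc (0 : ℝ) Λmax ∧
      (∀ π : Z → Bool → ℝ, IsPolicy π →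
        Lbeta ρ r c w1 w2 β C π p.2 ≤ Lbeta ρ r c w1 w2 β C p.1 p.2) ∧
      (∀ lam ∈ Set.Icc (0 : ℝ) Λmax,
        Lbeta ρ r c w1 w2 β C p.1 p.2 ≤ Lbeta ρ r c w1 w2 β C p.1 lam) :=
  saddle_point_exists_unique_general ρ hρ_pos r c w1 w2 β hβ C Λmax hΛmax
end

section
/- Suppose 0 ≤ c(z,a) ≤ M and 0 ≤ w2(z) ≤ K for all z ∈ Z, a ∈ {0,1}, with M, K > 0. Then for every z ∈ Z and all λ₁, λ₂ ∈ ℝ, KL( π_{λ₁}(·|z) ‖ π_{λ₂}(·|z) ) ≤ (M²K²/(2β²)) · (λ₁ − λ₂)²; consequently ∑_z ρ(z) · KL( π_{λ₁}(·|z) ‖ π_{λ₂}(·|z) ) ≤ (M²K²/(2β²)) · (λ₁ − λ₂)². -/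
open Finset

/-- `q_λ(z,a) = w1(z) r(z,a) − λ w2(z) c(z,a)`. -/
noncomputable def qfun {Z : Type*} (r c : Z → Bool → ℝ) (w1 w2 : Z → ℝ)
    (lam : ℝ) (z : Z) (a : Bool) : ℝ :=
  w1 z * r z a - lam * (w2 z * c z a)

/-- Partition function `Q(z,λ) = ∑_a exp(q_λ(z,a)/β)`. -/
noncomputable def Qpart {Z : Type*} (r c : Z → Bool → ℝ) (w1 w2 : Z → ℝ)
    (β lam : ℝ) (z : Z) : ℝ :=
  ∑ a, Real.exp (qfun r c w1 w2 lam z a / β)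

/-- Gibbs policy `π_λ(a|z) = exp(q_λ(z,a)/β) / Q(z,λ)`. -/
noncomputable def gibbs {Z : Type*} (r c : Z → Bool → ℝ) (w1 w2 : Z → ℝ)
    (β lam : ℝ) (z : Z) (a : Bool) : ℝ :=
  Real.exp (qfun r c w1 w2 lam z a / β) / Qpart r c w1 w2 β lam z

/-- KL divergence between two pmfs on `{0,1}` (with positive second argument):
`KL(p‖q) = ∑_a p(a) log(p(a)/q(a))`. -/
noncomputable def klBool (p q : Bool → ℝ) : ℝ :=
  ∑ a, p a * Real.log (p a / q a)

/-!
Gibbs' inequality lets us bound `KL(p‖q)` by the symmetrised divergence `KL(p‖q) + KL(q‖p)`.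
For two softmax distributions with scores `x`, `y` the log-partition functions cancel from the
symmetrised divergence, leaving `∑ₐ (p a - q a) (x a - y a)`; on `{0,1}` this is
`(σ u - σ v)(u - v)` for the logit gaps `u`, `v`, which is at most `(u - v)² / 4` because the
sigmoid `σ` is `1/4`-Lipschitz. For the Gibbs policies, `u - v = (λ₂ - λ₁) w2(z) (c(z,1) - c(z,0)) / β`.
-/

open Real

lemma Real.lipschitzWith_sigmoid : LipschitzWith 4⁻¹ sigmoid := by
  refine lipschitzWith_of_nnnorm_deriv_le differentiable_sigmoid fun x => ?_
  rw [← NNReal.coe_le_coe, coe_nnnorm, deriv_sigmoid, Real.norm_eq_abs,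
    abs_of_nonneg (mul_nonneg (sigmoid_nonneg x) (sub_nonneg.2 (sigmoid_le_one x)))]
  push_cast
  nlinarith [sq_nonneg (sigmoid x - 2⁻¹)]

lemma Real.sigmoid_sub_mul_sub_le (u v : ℝ) :
    (sigmoid u - sigmoid v) * (u - v) ≤ (u - v) ^ 2 / 4 := by
  have hlip : |sigmoid u - sigmoid v| ≤ 4⁻¹ * |u - v| := by
    simpa [Real.dist_eq] using lipschitzWith_sigmoid.dist_le_mul u v
  calc (sigmoid u - sigmoid v) * (u - v)
      ≤ |sigmoid u - sigmoid v| * |u - v| := by rw [← abs_mul]; exact le_abs_self _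
    _ ≤ 4⁻¹ * |u - v| * |u - v| := by gcongr
    _ = (u - v) ^ 2 / 4 := by rw [mul_assoc, abs_mul_abs_self]; ring

lemma sub_le_mul_log_div {p q : ℝ} (hp : 0 < p) (hq : 0 < q) : p - q ≤ p * log (p / q) := by
  have h := mul_le_mul_of_nonneg_left (one_sub_inv_le_log_of_pos (div_pos hp hq)) hp.le
  rwa [inv_div, mul_one_sub, mul_div_cancel₀ _ hp.ne'] at h

lemma klBool_nonneg {p q : Bool → ℝ} (hp : ∀ a, 0 < p a) (hq : ∀ a, 0 < q a)
    (hsum : ∑ a, q a = ∑ a, p a) : 0 ≤ klBool p q :=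
  calc 0 = ∑ a, (p a - q a) := by rw [sum_sub_distrib, hsum, sub_self]
    _ ≤ klBool p q := sum_le_sum fun a _ => sub_le_mul_log_div (hp a) (hq a)

lemma klBool_add_klBool_swap (p q : Bool → ℝ) :
    klBool p q + klBool q p = ∑ a, (p a - q a) * log (p a / q a) := by
  simp only [klBool, ← sum_add_distrib, ← inv_div (p _), log_inv]
  exact sum_congr rfl fun a _ => by ring

noncomputable def softmax {α : Type*} [Fintype α] (x : α → ℝ) (a : α) : ℝ :=
  exp (x a) / ∑ b, exp (x b)

section Softmax

variable {α : Type*} [Fintype α] (x y : α → ℝ)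

lemma sum_exp_pos [Nonempty α] : 0 < ∑ b, exp (x b) :=
  sum_pos (fun _ _ => exp_pos _) univ_nonempty

lemma softmax_pos (a : α) : 0 < softmax x a :=
  have : Nonempty α := ⟨a⟩
  div_pos (exp_pos _) (sum_exp_pos x)

lemma sum_softmax [Nonempty α] : ∑ a, softmax x a = 1 := by
  simp only [softmax, ← sum_div, div_self (sum_exp_pos x).ne']

lemma log_softmax (a : α) : log (softmax x a) = x a - log (∑ b, exp (x b)) := by
  have : Nonempty α := ⟨a⟩
  rw [softmax, log_div (exp_pos _).ne' (sum_exp_pos x).ne', log_exp]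

lemma sum_softmax_sub_mul_log_div [Nonempty α] :
    ∑ a, (softmax x a - softmax y a) * log (softmax x a / softmax y a)
      = ∑ a, (softmax x a - softmax y a) * (x a - y a) := by
  have hlog a : log (softmax x a / softmax y a)
      = (x a - y a) - (log (∑ b, exp (x b)) - log (∑ b, exp (y b))) := by
    rw [log_div (softmax_pos x a).ne' (softmax_pos y a).ne', log_softmax, log_softmax]; ring
  simp only [hlog, mul_sub, sum_sub_distrib, ← sum_mul, sum_softmax, sub_self, zero_mul, sub_zero]

end Softmax

lemma softmax_true (x : Bool → ℝ) : softmax x true = sigmoid (x true - x false) := by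
  rw [softmax, sigmoid_def, Fintype.sum_bool, neg_sub, exp_sub]
  field_simp

lemma softmax_false (x : Bool → ℝ) : softmax x false = 1 - softmax x true := by
  rw [← sum_softmax x, Fintype.sum_bool]; ring

lemma klBool_softmax_le (x y : Bool → ℝ) :
    klBool (softmax x) (softmax y) ≤ ((x true - x false) - (y true - y false)) ^ 2 / 4 :=
  calc klBool (softmax x) (softmax y)
      ≤ klBool (softmax x) (softmax y) + klBool (softmax y) (softmax x) :=
        le_add_of_nonneg_right <| klBool_nonneg (softmax_pos y) (softmax_pos x)
          (by rw [sum_softmax, sum_softmax])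
    _ = (sigmoid (x true - x false) - sigmoid (y true - y false))
          * ((x true - x false) - (y true - y false)) := by
        rw [klBool_add_klBool_swap, sum_softmax_sub_mul_log_div, Fintype.sum_bool,
          softmax_false x, softmax_false y, softmax_true, softmax_true]
        ring
    _ ≤ _ := sigmoid_sub_mul_sub_le _ _

lemma gibbs_eq_softmax {Z : Type*} (r c : Z → Bool → ℝ) (w1 w2 : Z → ℝ) (β lam : ℝ) (z : Z) :
    gibbs r c w1 w2 β lam z = softmax fun a => qfun r c w1 w2 lam z a / β :=
  rfl

lemma klBool_gibbs_le {Z : Type*} (r c : Z → Bool → ℝ) (w1 w2 : Z → ℝ) (β M K : ℝ)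
    (z : Z) (hw2 : 0 ≤ w2 z) (hw2_bound : w2 z ≤ K) (hc_bound : ∀ a, 0 ≤ c z a ∧ c z a ≤ M)
    (lam₁ lam₂ : ℝ) :
    klBool (gibbs r c w1 w2 β lam₁ z) (gibbs r c w1 w2 β lam₂ z)
      ≤ M ^ 2 * K ^ 2 / (2 * β ^ 2) * (lam₁ - lam₂) ^ 2 := by
  set Δc := c z true - c z false
  have hΔc : |Δc| ≤ M := abs_sub_le_of_nonneg_of_le (hc_bound true).1 (hc_bound true).2
    (hc_bound false).1 (hc_bound false).2
  have hscale : (w2 z * Δc) ^ 2 ≤ (K * M) ^ 2 := by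
    have hK : 0 ≤ K := hw2.trans hw2_bound
    rw [← sq_abs, abs_mul, abs_of_nonneg hw2]
    gcongr
  rw [gibbs_eq_softmax, gibbs_eq_softmax]
  calc _ ≤ _ := klBool_softmax_le _ _
    _ = (w2 z * Δc) ^ 2 * ((lam₁ - lam₂) ^ 2 / β ^ 2) / 4 := by simp only [qfun, Δc]; ring
    _ ≤ (K * M) ^ 2 * ((lam₁ - lam₂) ^ 2 / β ^ 2) / 2 := by gcongr; norm_num
    _ = M ^ 2 * K ^ 2 / (2 * β ^ 2) * (lam₁ - lam₂) ^ 2 := by ring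

theorem kl_gibbs_bound_general {Z : Type*} [Fintype Z]
    (ρ : Z → ℝ) (hρ_pos : ∀ z, 0 < ρ z) (hρ_sum : ∑ z, ρ z = 1)
    (r c : Z → Bool → ℝ) (w1 w2 : Z → ℝ)
    (hw2 : ∀ z, 0 ≤ w2 z)
    (β : ℝ)
    (M K : ℝ)
    (hc_bound : ∀ z a, 0 ≤ c z a ∧ c z a ≤ M)
    (hw2_bound : ∀ z, w2 z ≤ K) :
    (∀ (z : Z) (lam₁ lam₂ : ℝ),
      klBool (gibbs r c w1 w2 β lam₁ z) (gibbs r c w1 w2 β lam₂ z)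
        ≤ M ^ 2 * K ^ 2 / (2 * β ^ 2) * (lam₁ - lam₂) ^ 2) ∧
    (∀ lam₁ lam₂ : ℝ,
      ∑ z, ρ z * klBool (gibbs r c w1 w2 β lam₁ z) (gibbs r c w1 w2 β lam₂ z)
        ≤ M ^ 2 * K ^ 2 / (2 * β ^ 2) * (lam₁ - lam₂) ^ 2) := by
  have hpoint z := klBool_gibbs_le r c w1 w2 β M K z (hw2 z) (hw2_bound z) (hc_bound z)
  refine ⟨hpoint, fun lam₁ lam₂ => ?_⟩
  calc ∑ z, ρ z * klBool (gibbs r c w1 w2 β lam₁ z) (gibbs r c w1 w2 β lam₂ z)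
      ≤ ∑ z, ρ z * (M ^ 2 * K ^ 2 / (2 * β ^ 2) * (lam₁ - lam₂) ^ 2) :=
        sum_le_sum fun z _ => mul_le_mul_of_nonneg_left (hpoint z lam₁ lam₂) (hρ_pos z).le
    _ = M ^ 2 * K ^ 2 / (2 * β ^ 2) * (lam₁ - lam₂) ^ 2 := by rw [← sum_mul, hρ_sum, one_mul]

/-- under the bounds `0 ≤ c ≤ M` and `0 ≤ w2 ≤ K`, the KL
divergence between Gibbs conditionals at `λ₁` and `λ₂` is at most
`(M²K²/(2β²))(λ₁ − λ₂)²`, pointwise in `z` and hence also averaged over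
`ρ`. -/
theorem kl_gibbs_bound {Z : Type*} [Fintype Z] [Nonempty Z]
    (ρ : Z → ℝ) (hρ_pos : ∀ z, 0 < ρ z) (hρ_sum : ∑ z, ρ z = 1)
    (r c : Z → Bool → ℝ) (w1 w2 : Z → ℝ)
    (hw1 : ∀ z, 0 ≤ w1 z) (hw2 : ∀ z, 0 ≤ w2 z)
    (β : ℝ) (hβ : 0 < β)
    (M K : ℝ) (hM : 0 < M) (hK : 0 < K)
    (hc_bound : ∀ z a, 0 ≤ c z a ∧ c z a ≤ M)
    (hw2_bound : ∀ z, w2 z ≤ K) :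
    (∀ (z : Z) (lam₁ lam₂ : ℝ),
      klBool (gibbs r c w1 w2 β lam₁ z) (gibbs r c w1 w2 β lam₂ z)
        ≤ M ^ 2 * K ^ 2 / (2 * β ^ 2) * (lam₁ - lam₂) ^ 2) ∧
    (∀ lam₁ lam₂ : ℝ,
      ∑ z, ρ z * klBool (gibbs r c w1 w2 β lam₁ z) (gibbs r c w1 w2 β lam₂ z)
        ≤ M ^ 2 * K ^ 2 / (2 * β ^ 2) * (lam₁ - lam₂) ^ 2) :=
  kl_gibbs_bound_general ρ hρ_pos hρ_sum r c w1 w2 hw2 β M K hc_bound hw2_bound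
end
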